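/- Let n ≥ 1 and define h_n : [0,1]^n → [0,1) by h_n(x) = min(1 − 2^{−(n+1)}, (2^{n+1}−1)·min_{1≤i≤n} x_i). Let k_1, …, k_n ≥ 0 be integers and let a_j = m_j·2^{−k_j} for integers 0 ≤ m_j < 2^{k_j} (1 ≤ j ≤ n). Then h_n crosses the box S = (∏_{j=1}^{n} [a_j, a_j + 2^{−k_j})) × [0,1). -/

import Mathlib

open MeasureTheory

/-- `f` crosses `S ⊆ ℝ^{n+1}` if both the part of `S` strictly below the graph of `f`
and the part strictly above it have positive Lebesgue measure. -/
def Crosses (n : ℕ) (f : (Fin n → ℝ) → ℝ) (S : Set (Fin (n + 1) → ℝ)) : Prop :=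
  0 < volume (S ∩ {p | f (fun j => p j.castSucc) < p (Fin.last n)}) ∧
  0 < volume (S ∩ {p | p (Fin.last n) < f (fun j => p j.castSucc)})

/-- The function `h_n(x) = min(1 - 2^{-(n+1)}, (2^{n+1} - 1) · min_i x_i)`. -/
noncomputable def hfun (n : ℕ) (x : Fin n → ℝ) : ℝ :=
  min (1 - ((2 : ℝ) ^ (n + 1))⁻¹) (((2 : ℝ) ^ (n + 1) - 1) * ⨅ i, x i)

/-!
Since `h_n ≤ 1 - 2^{-(n+1)} < 1`, the slab of the box above that level lies over the graph.
For the part below the graph, take the upper half of the box in each coordinate: its lower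
corner `y` has positive coordinates, so `h_n ≥ h_n(y) > 0` there by monotonicity, and the slab
`0 < t < h_n(y)` lies under the graph.
-/

open Set

lemma volume_pos_of_forall_Ioo {n : ℕ} {l u : Fin n → ℝ} {a b : ℝ} (hlu : ∀ j, l j < u j)
    (hab : a < b) {s : Set (Fin (n + 1) → ℝ)}
    (hs : ∀ p : Fin (n + 1) → ℝ, (∀ j, p j.castSucc ∈ Ioo (l j) (u j)) →
      p (Fin.last n) ∈ Ioo a b → p ∈ s) :
    0 < volume s := by
  have hbox : 0 < volume (univ.pi fun i =>
      Ioo (Fin.snoc (α := fun _ => ℝ) l a i) (Fin.snoc (α := fun _ => ℝ) u b i)) := by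
    rw [Real.volume_pi_Ioo]
    refine CanonicallyOrderedAdd.prod_pos.mpr fun i _ => ENNReal.ofReal_pos.mpr (sub_pos.mpr ?_)
    induction i using Fin.lastCases with
    | last => simpa using hab
    | cast j => simpa using hlu j
  refine hbox.trans_le (measure_mono fun p hp => hs p (fun j => ?_) ?_)
  · simpa using hp j.castSucc (mem_univ _)
  · simpa using hp (Fin.last n) (mem_univ _)

theorem Crosses.of_monotone {n : ℕ} {f : (Fin n → ℝ) → ℝ} (hf : Monotone f) {A : ℝ}
    (hA : A < 1) (hfA : ∀ x, f x ≤ A) (hf_pos : ∀ x, (∀ j, 0 < x j) → 0 < f x)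
    {a ε : Fin n → ℝ} (ha : ∀ j, 0 ≤ a j) (hε : ∀ j, 0 < ε j) :
    Crosses n f {p | (∀ i : Fin n, p i.castSucc ∈ Ico (a i) (a i + ε i)) ∧
      p (Fin.last n) ∈ Ico (0 : ℝ) 1} := by
  have hA₀ : 0 < A := (hf_pos (fun _ => 1) fun _ => one_pos).trans_le (hfA _)
  obtain ⟨y, hy_def⟩ : ∃ y : Fin n → ℝ, ∀ j, y j = a j + ε j / 2 := ⟨_, fun _ => rfl⟩
  have hy : 0 < f y := hf_pos y fun j => by linarith [ha j, hε j, hy_def j]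
  constructor
  · refine volume_pos_of_forall_Ioo (fun j => lt_add_of_pos_right (a j) (hε j)) hA
      fun p hx ht => ⟨⟨fun j => Ioo_subset_Ico_self (hx j), hA₀.le.trans ht.1.le, ht.2⟩, ?_⟩
    exact (hfA _).trans_lt ht.1
  · refine volume_pos_of_forall_Ioo (l := y) (fun j => by linarith [hε j, hy_def j]) hy
      fun p hx ht => ⟨⟨fun j => ⟨by linarith [(hx j).1, hε j, hy_def j], (hx j).2⟩, ht.1.le,
        ht.2.trans_le ((hfA _).trans hA.le)⟩, ?_⟩
    exact ht.2.trans_le (hf fun j => (hx j).1.le)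

lemma hfun_le (n : ℕ) (x : Fin n → ℝ) : hfun n x ≤ 1 - ((2 : ℝ) ^ (n + 1))⁻¹ :=
  min_le_left _ _

lemma hfun_monotone (n : ℕ) : Monotone (hfun n) := fun x y hxy =>
  min_le_min_left _ <| mul_le_mul_of_nonneg_left
    (ciInf_mono (Finite.bddBelow_range x) hxy) (by norm_num [one_le_pow₀])

lemma hfun_pos {n : ℕ} (hn : n ≠ 0) {x : Fin n → ℝ} (hx : ∀ j, 0 < x j) : 0 < hfun n x := by
  have : Nonempty (Fin n) := ⟨⟨0, Nat.pos_of_ne_zero hn⟩⟩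
  obtain ⟨j, hj⟩ := exists_eq_ciInf_of_finite (f := x)
  have h2 : (1 : ℝ) < 2 ^ (n + 1) := one_lt_pow₀ one_lt_two n.succ_ne_zero
  refine lt_min (sub_pos.mpr (inv_lt_one_of_one_lt₀ h2)) (mul_pos (sub_pos.mpr h2) ?_)
  exact hj ▸ hx j

theorem stmt_12_general (n : ℕ) (hn : 1 ≤ n) (k m : Fin n → ℕ) :
    Crosses n (hfun n)
      {p : Fin (n + 1) → ℝ |
        (∀ i : Fin n, p i.castSucc ∈
          Set.Ico ((m i : ℝ) / 2 ^ k i) ((m i : ℝ) / 2 ^ k i + ((2 : ℝ) ^ k i)⁻¹)) ∧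
        p (Fin.last n) ∈ Set.Ico (0 : ℝ) 1} :=
  Crosses.of_monotone (hfun_monotone n) (sub_lt_self 1 (by positivity)) (hfun_le n)
    (fun _ => hfun_pos (by omega)) (fun _ => by positivity) (fun _ => by positivity)

theorem stmt_12 (n : ℕ) (hn : 1 ≤ n) (k m : Fin n → ℕ) (hm : ∀ j, m j < 2 ^ k j) :
    Crosses n (hfun n)
      {p : Fin (n + 1) → ℝ |
        (∀ i : Fin n, p i.castSucc ∈
          Set.Ico ((m i : ℝ) / 2 ^ k i) ((m i : ℝ) / 2 ^ k i + ((2 : ℝ) ^ k i)⁻¹)) ∧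
        p (Fin.last n) ∈ Set.Ico (0 : ℝ) 1} :=
  stmt_12_general n hn k m
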